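/- For every real number k > 1/2, the (absolutely convergent) double integral over the region {(t₁, t₂) ∈ ℝ² : 0 < t₁ < t₂} satisfies ∫∫_{0<t₁<t₂} (t₁·t₂)^{k−3/2} · (t₁ − t₂) · e^{−(t₁+t₂)} dt₁ dt₂ = −(1/√π) · Γ(k) · Γ(k − 1/2). -/

import Mathlib

/-!
Substituting `t₁ = t y`, `t₂ = t` (Jacobian `t`) maps `(0, 1) × (0, ∞)` onto the region and turns
the integrand into `y ^ (k - 3/2) (y - 1) · t ^ (2k - 1) e ^ (-(1 + y) t)`. The `t`-integral is
`Γ(2k) (1 + y) ^ (-2k)`, and `y ↦ y ^ (k - 1/2) (1 + y) ^ (1 - 2k)` is, up to the factor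
`-(k - 1/2)`, an antiderivative of what remains, so the integral equals
`-2 ^ (1 - 2k) Γ(2k) / (k - 1/2)`. Legendre's duplication formula rewrites this as
`-Γ(k) Γ(k - 1/2) / √π`.
-/

open MeasureTheory Set Real

def ratioCoord (x : ℝ × ℝ) : ℝ × ℝ := (x.2 * x.1, x.2)

noncomputable def ratioCoordDeriv (x : ℝ × ℝ) : ℝ × ℝ →L[ℝ] ℝ × ℝ :=
  LinearMap.toContinuousLinearMap
    (Matrix.toLin (Module.Basis.finTwoProd ℝ) (Module.Basis.finTwoProd ℝ) !![x.2, x.1; 0, 1])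

theorem det_ratioCoordDeriv (x : ℝ × ℝ) : (ratioCoordDeriv x).det = x.2 := by
  simp [ratioCoordDeriv, LinearMap.det_toContinuousLinearMap, LinearMap.det_toLin,
    Matrix.det_fin_two_of]

theorem hasFDerivAt_ratioCoord (x : ℝ × ℝ) : HasFDerivAt ratioCoord (ratioCoordDeriv x) x := by
  rw [ratioCoordDeriv, Matrix.toLin_finTwoProd_toContinuousLinearMap]
  refine (hasFDerivAt_snd.mul hasFDerivAt_fst |>.prodMk hasFDerivAt_snd).congr_fderiv ?_
  simp

theorem ratioCoord_image :
    ratioCoord '' (Ioo 0 1 ×ˢ Ioi 0) = {p : ℝ × ℝ | 0 < p.1 ∧ p.1 < p.2} := by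
  ext ⟨t₁, t₂⟩
  constructor
  · rintro ⟨⟨y, t⟩, ⟨⟨hy₀, hy₁⟩, ht : 0 < t⟩, h⟩
    simp only [ratioCoord, Prod.mk.injEq] at h
    obtain ⟨rfl, rfl⟩ := h
    exact ⟨mul_pos ht hy₀, by nlinarith⟩
  · rintro ⟨h₁, h₂⟩
    have ht₂ : 0 < t₂ := h₁.trans h₂
    refine ⟨(t₁ / t₂, t₂), ⟨⟨div_pos h₁ ht₂, (div_lt_one ht₂).2 h₂⟩, ht₂⟩, ?_⟩
    simp [ratioCoord, mul_div_cancel₀ _ ht₂.ne']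

theorem ratioCoord_injOn : InjOn ratioCoord (Ioo 0 1 ×ˢ Ioi 0) := by
  rintro ⟨y, t⟩ ⟨-, ht : 0 < t⟩ ⟨y', t'⟩ - h
  simp only [ratioCoord, Prod.mk.injEq] at h
  obtain ⟨h₁, rfl⟩ := h
  simp [mul_left_cancel₀ ht.ne' h₁]

theorem setIntegral_lt_eq_setIntegral_ratioCoord {E : Type*} [NormedAddCommGroup E]
    [NormedSpace ℝ E] (f : ℝ × ℝ → E) :
    ∫ p in {p : ℝ × ℝ | 0 < p.1 ∧ p.1 < p.2}, f p =
      ∫ x in Ioo 0 1 ×ˢ Ioi 0, x.2 • f (ratioCoord x) := by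
  have hs : MeasurableSet (Ioo (0 : ℝ) 1 ×ˢ Ioi (0 : ℝ)) := measurableSet_Ioo.prod measurableSet_Ioi
  rw [← ratioCoord_image, integral_image_eq_integral_abs_det_fderiv_smul volume hs
    (fun x _ => (hasFDerivAt_ratioCoord x).hasFDerivWithinAt) ratioCoord_injOn]
  refine setIntegral_congr_fun hs fun x hx => ?_
  rw [det_ratioCoordDeriv, abs_of_pos (show 0 < x.2 from hx.2)]

theorem mul_integrand_ratioCoord (k : ℝ) {y t : ℝ} (hy : 0 ≤ y) (ht : 0 < t) :
    t * ((t * y * t) ^ (k - 3 / 2) * (t * y - t) * exp (-(t * y + t))) =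
      y ^ (k - 3 / 2) * (y - 1) * (t ^ (2 * k - 1) * exp (-((1 + y) * t))) := by
  have hpow : (t * y * t) ^ (k - 3 / 2) * (t * t) = y ^ (k - 3 / 2) * t ^ (2 * k - 1) := by
    rw [show t * y * t = t ^ (2 : ℝ) * y by rw [rpow_two]; ring,
      mul_rpow (by positivity) hy, ← rpow_mul ht.le, show t * t = t ^ (2 : ℝ) by rw [rpow_two]; ring]
    rw [mul_right_comm, ← rpow_add ht]
    ring_nf
  calc _ = (t * y * t) ^ (k - 3 / 2) * (t * t) * (y - 1) * exp (-((1 + y) * t)) := by ring_nf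
    _ = _ := by rw [hpow]; ring

theorem integral_rpow_mul_exp_neg_mul_Ioi_eq_rpow_neg {a r : ℝ} (ha : 0 < a) (hr : 0 < r) :
    ∫ t in Ioi 0, t ^ (a - 1) * exp (-(r * t)) = r ^ (-a) * Gamma a := by
  rw [integral_rpow_mul_exp_neg_mul_Ioi ha hr, one_div, inv_rpow hr.le, rpow_neg hr.le]

theorem hasDerivAt_rpow_mul_one_add_rpow (k : ℝ) {y : ℝ} (hy : 0 < y) :
    HasDerivAt (fun y => y ^ (k - 1 / 2) * (1 + y) ^ (1 - 2 * k))
      ((k - 1 / 2) * (y ^ (k - 3 / 2) * (1 - y) * (1 + y) ^ (-(2 * k)))) y := by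
  have h₁ : 0 < 1 + y := by linarith
  refine ((hasDerivAt_rpow_const (p := k - 1 / 2) (Or.inl hy.ne')).mul
    (((hasDerivAt_id y).const_add 1).rpow_const (p := 1 - 2 * k) (Or.inl h₁.ne'))).congr_deriv ?_
  simp only [id]
  rw [show k - 1 / 2 - 1 = k - 3 / 2 by ring, show 1 - 2 * k - 1 = -(2 * k) by ring,
    show k - 1 / 2 = (k - 3 / 2) + 1 by ring, rpow_add hy, rpow_one,
    show 1 - 2 * k = -(2 * k) + 1 by ring, rpow_add h₁, rpow_one]
  ring

theorem setIntegral_rpow_mul_sub_one_mul_one_add_rpow {k : ℝ} (hk : 1 / 2 < k) :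
    ∫ y in Ioo 0 1, y ^ (k - 3 / 2) * (y - 1) * (1 + y) ^ (-(2 * k)) =
      -(2 ^ (1 - 2 * k) / (k - 1 / 2)) := by
  have hc : 0 < k - 1 / 2 := by linarith
  have hpos : ∀ y ∈ Icc (0 : ℝ) 1, 1 + y ≠ 0 := fun y hy =>
    (add_pos_of_pos_of_nonneg one_pos hy.1).ne'
  have hcont : ContinuousOn (fun y : ℝ => y ^ (k - 1 / 2) * (1 + y) ^ (1 - 2 * k)) (Icc 0 1) :=
    (continuousOn_id.rpow_const fun _ _ => Or.inr hc.le).mul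
      ((continuousOn_const.add continuousOn_id).rpow_const fun y hy => Or.inl (hpos y hy))
  have hint : IntervalIntegrable
      (fun y : ℝ => (k - 1 / 2) * (y ^ (k - 3 / 2) * (1 - y) * (1 + y) ^ (-(2 * k)))) volume 0 1 := by
    have hg : ContinuousOn (fun y : ℝ => (1 - y) * (1 + y) ^ (-(2 * k))) (uIcc 0 1) := by
      rw [uIcc_of_le zero_le_one]
      exact (continuousOn_const.sub continuousOn_id).mul
        ((continuousOn_const.add continuousOn_id).rpow_const fun y hy => Or.inl (hpos y hy))
    refine .const_mul ?_ _
    simpa only [mul_assoc] using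
      (intervalIntegral.intervalIntegrable_rpow' (by linarith : -1 < k - 3 / 2)).mul_continuousOn hg
  have hFTC := intervalIntegral.integral_eq_sub_of_hasDerivAt_of_le zero_le_one hcont
    (fun y hy => hasDerivAt_rpow_mul_one_add_rpow k hy.1) hint
  rw [← integral_Ioc_eq_integral_Ioo, ← intervalIntegral.integral_of_le zero_le_one]
  calc ∫ y in 0..1, y ^ (k - 3 / 2) * (y - 1) * (1 + y) ^ (-(2 * k))
      = ∫ y in 0..1, -(k - 1 / 2)⁻¹ *
          ((k - 1 / 2) * (y ^ (k - 3 / 2) * (1 - y) * (1 + y) ^ (-(2 * k)))) := by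
        congr 1; ext y; rw [neg_mul, inv_mul_cancel_left₀ hc.ne']; ring
    _ = -(2 ^ (1 - 2 * k) / (k - 1 / 2)) := by
        rw [intervalIntegral.integral_const_mul, hFTC, one_rpow, zero_rpow hc.ne',
          one_add_one_eq_two]
        ring

theorem Gamma_mul_Gamma_sub_half {k : ℝ} (hk : k ≠ 1 / 2) :
    Gamma k * Gamma (k - 1 / 2) = Gamma (2 * k) * 2 ^ (1 - 2 * k) * √π / (k - 1 / 2) := by
  have hc : k - 1 / 2 ≠ 0 := sub_ne_zero.2 hk
  have hdup := Gamma_mul_Gamma_add_half (k - 1 / 2)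
  have hrec : Gamma (2 * k) = (2 * k - 1) * Gamma (2 * k - 1) := by
    rw [← Gamma_add_one (by contrapose! hc; linarith), sub_add_cancel]
  have htwo : (2 : ℝ) ^ (1 - 2 * (k - 1 / 2)) = 2 * 2 ^ (1 - 2 * k) := by
    rw [show 1 - 2 * (k - 1 / 2) = 1 + (1 - 2 * k) by ring, rpow_add two_pos, rpow_one]
  rw [sub_add_cancel, htwo, show 2 * (k - 1 / 2) = 2 * k - 1 by ring] at hdup
  rw [hrec, eq_div_iff hc, mul_comm (Gamma k), hdup]
  ring

theorem integrableOn_rpow_mul_sub_one_mul_rpow_mul_exp {k : ℝ} (hk : 1 / 2 < k) :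
    IntegrableOn (fun x : ℝ × ℝ =>
      x.1 ^ (k - 3 / 2) * (x.1 - 1) * (x.2 ^ (2 * k - 1) * exp (-((1 + x.1) * x.2))))
      (Ioo 0 1 ×ˢ Ioi 0) := by
  have hs : MeasurableSet (Ioo (0 : ℝ) 1 ×ˢ Ioi (0 : ℝ)) := measurableSet_Ioo.prod measurableSet_Ioi
  have hbound : IntegrableOn (fun x : ℝ × ℝ => x.1 ^ (k - 3 / 2) * (exp (-x.2) * x.2 ^ (2 * k - 1)))
      (Ioo 0 1 ×ˢ Ioi 0) := by
    rw [IntegrableOn, Measure.volume_eq_prod, ← Measure.prod_restrict]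
    exact Integrable.mul_prod ((intervalIntegral.integrableOn_Ioo_rpow_iff one_pos).2 (by linarith))
      (GammaIntegral_convergent (by linarith))
  refine hbound.mono' (by fun_prop) ((ae_restrict_iff' hs).2 (.of_forall ?_))
  rintro ⟨y, t⟩ ⟨⟨hy₀, hy₁⟩, ht : 0 < t⟩
  dsimp only at hy₀ hy₁ ⊢
  have hexp : exp (-((1 + y) * t)) ≤ exp (-t) := exp_le_exp.2 (by nlinarith)
  have hy : ‖y - 1‖ ≤ 1 := by rw [norm_eq_abs, abs_le]; constructor <;> linarith
  rw [norm_mul, norm_mul, norm_of_nonneg (rpow_nonneg hy₀.le _),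
    norm_of_nonneg (by positivity : 0 ≤ t ^ (2 * k - 1) * exp (-((1 + y) * t)))]
  calc y ^ (k - 3 / 2) * ‖y - 1‖ * (t ^ (2 * k - 1) * exp (-((1 + y) * t)))
      ≤ y ^ (k - 3 / 2) * 1 * (t ^ (2 * k - 1) * exp (-t)) := by gcongr
    _ = _ := by ring

theorem weyl_integral_rank_two (k : ℝ) (hk : 1 / 2 < k) :
    ∫ p in {p : ℝ × ℝ | 0 < p.1 ∧ p.1 < p.2},
      (p.1 * p.2) ^ (k - 3 / 2) * (p.1 - p.2) * Real.exp (-(p.1 + p.2)) =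
    -(1 / Real.sqrt Real.pi) * Real.Gamma k * Real.Gamma (k - 1 / 2) := by
  calc _ = ∫ x in Ioo 0 1 ×ˢ Ioi 0,
        x.1 ^ (k - 3 / 2) * (x.1 - 1) * (x.2 ^ (2 * k - 1) * exp (-((1 + x.1) * x.2))) := by
        rw [setIntegral_lt_eq_setIntegral_ratioCoord]
        exact setIntegral_congr_fun (measurableSet_Ioo.prod measurableSet_Ioi)
          fun x hx => mul_integrand_ratioCoord k hx.1.1.le hx.2
    _ = ∫ y in Ioo 0 1, ∫ t in Ioi 0,
        y ^ (k - 3 / 2) * (y - 1) * (t ^ (2 * k - 1) * exp (-((1 + y) * t))) :=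
        setIntegral_prod _ (integrableOn_rpow_mul_sub_one_mul_rpow_mul_exp hk)
    _ = ∫ y in Ioo 0 1, y ^ (k - 3 / 2) * (y - 1) * (1 + y) ^ (-(2 * k)) * Gamma (2 * k) :=
        setIntegral_congr_fun measurableSet_Ioo fun y hy => by
          rw [integral_const_mul,
            integral_rpow_mul_exp_neg_mul_Ioi_eq_rpow_neg (by linarith) (by linarith [hy.1])]
          ring
    _ = _ := by
        rw [integral_mul_const, setIntegral_rpow_mul_sub_one_mul_one_add_rpow hk, mul_assoc,
          Gamma_mul_Gamma_sub_half hk.ne']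
        field_simp
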